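/- arXiv:2409.03492 — 2 statements merged into one kernel-verified Lean document; each statement's English description precedes it below -/
import Mathlib

section
/- Let μ⋆, μₙ ∈ ℝ and σ, σₙ > 0. Then ∫ KL(N(μ⋆, σ²) ‖ N(μ, σ²)) dN(μₙ, σₙ²)(μ) = ((μ⋆ − μₙ)² + σₙ²)/(2σ²). -/
open MeasureTheory ProbabilityTheory Real
open scoped ENNReal NNReal Classical

/-- Kullback-Leibler divergence: `∫ log (dQ/dP) dQ` when `Q ≪ P` and the
log-likelihood ratio is integrable, `+∞` otherwise. -/
noncomputable def klDiv {Ω : Type*} [MeasurableSpace Ω] (Q P : Measure Ω) : ℝ≥0∞ :=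
  if Q ≪ P ∧ Integrable (fun x => Real.log (Q.rnDeriv P x).toReal) Q
  then ENNReal.ofReal (∫ x, Real.log (Q.rnDeriv P x).toReal ∂Q)
  else ⊤

lemma aux_integrable_sq_exp {b : ℝ} (hb : 0 < b) :
    Integrable (fun x : ℝ => x ^ 2 * rexp (-b * x ^ 2)) := by
  have := integrable_rpow_mul_exp_neg_mul_sq hb (s := 2) (by norm_num)
  simpa [Real.rpow_two] using this

lemma aux_integral_sq_exp {b : ℝ} (hb : 0 < b) :
    ∫ x : ℝ, x ^ 2 * rexp (-b * x ^ 2) = Real.sqrt (π / b) / (2 * b) := by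
  have hint := aux_integrable_sq_exp hb
  have hsplit : (∫ x : ℝ, x ^ 2 * rexp (-b * x ^ 2))
      = 2 * ∫ x in Set.Ioi (0:ℝ), x ^ 2 * rexp (-b * x ^ 2) := by
    rw [← intervalIntegral.integral_Iic_add_Ioi (b := (0:ℝ)) hint.integrableOn hint.integrableOn]
    have : (∫ x in Set.Iic (0:ℝ), x ^ 2 * rexp (-b * x ^ 2))
        = ∫ x in Set.Ioi (0:ℝ), x ^ 2 * rexp (-b * x ^ 2) := by
      have := integral_comp_neg_Iic (0:ℝ) (fun x => x ^ 2 * rexp (-b * x ^ 2))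
      simpa using this
    rw [this]; ring
  have hIoi : (∫ x in Set.Ioi (0:ℝ), x ^ 2 * rexp (-b * x ^ 2))
      = b ^ (-(3:ℝ)/2) * (1/2) * Real.Gamma (3/2) := by
    have := integral_rpow_mul_exp_neg_mul_rpow (p := 2) (q := 2) (b := b)
      (by norm_num) (by norm_num) hb
    rw [show ((2:ℝ) + 1) = 3 by norm_num] at this
    rw [← this]
    refine setIntegral_congr_fun measurableSet_Ioi (fun x hx => ?_)
    rw [Real.rpow_two]
  have hG : Real.Gamma (3/2) = Real.sqrt π / 2 := by
    rw [show (3/2 : ℝ) = 1/2 + 1 by norm_num, Real.Gamma_add_one (by norm_num),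
      Real.Gamma_one_half_eq]
    ring
  have hb' : b ^ (-(3:ℝ)/2) = (Real.sqrt b)⁻¹ * b⁻¹ := by
    rw [show (-(3:ℝ)/2) = (-(1:ℝ)/2) + (-1) by norm_num, Real.rpow_add hb,
      Real.rpow_neg_one]
    congr 1
    rw [show (-(1:ℝ)/2) = -(1/2) by norm_num, Real.rpow_neg hb.le, ← Real.sqrt_eq_rpow]
  have hsqrt : Real.sqrt (π / b) = Real.sqrt π / Real.sqrt b :=
    Real.sqrt_div pi_pos.le b
  rw [hsplit, hIoi, hG, hb', hsqrt]
  field_simp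

lemma aux_integral_lin_exp {b : ℝ} (hb : 0 < b) :
    ∫ x : ℝ, x * rexp (-b * x ^ 2) = 0 := by
  have h : (∫ x : ℝ, x * rexp (-b * x ^ 2))
      = ∫ x : ℝ, (-x) * rexp (-b * (-x) ^ 2) := (integral_neg_eq_self _ _).symm
  have h2 : (∫ x : ℝ, (-x) * rexp (-b * (-x) ^ 2))
      = - ∫ x : ℝ, x * rexp (-b * x ^ 2) := by
    rw [← integral_neg]; congr 1; funext x; simp [neg_pow]
  linarith [h.trans h2]

lemma aux_core {b A : ℝ} (hb : 0 < b) :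
    Integrable (fun u : ℝ => (u + A) ^ 2 * rexp (-b * u ^ 2)) ∧
    ∫ u : ℝ, (u + A) ^ 2 * rexp (-b * u ^ 2)
      = Real.sqrt (π / b) * (1 / (2 * b) + A ^ 2) := by
  have hfun : (fun u : ℝ => (u + A) ^ 2 * rexp (-b * u ^ 2))
      = fun u : ℝ => u ^ 2 * rexp (-b * u ^ 2) + ((2 * A) * (u * rexp (-b * u ^ 2))
          + A ^ 2 * rexp (-b * u ^ 2)) := by
    funext u; ring
  have h1 := aux_integrable_sq_exp hb
  have h2 := (integrable_mul_exp_neg_mul_sq hb).const_mul (2 * A)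
  have h3 := (integrable_exp_neg_mul_sq hb).const_mul (A ^ 2)
  constructor
  · rw [hfun]; exact h1.add (h2.add h3 : Integrable (fun u : ℝ => (2 * A) * (u * rexp (-b * u ^ 2)) + A ^ 2 * rexp (-b * u ^ 2)) ℙ)
  · have h23 : Integrable (fun u : ℝ => (2 * A) * (u * rexp (-b * u ^ 2))
        + A ^ 2 * rexp (-b * u ^ 2)) ℙ := h2.add h3
    rw [hfun, integral_add h1 h23, integral_add h2 h3, integral_const_mul, integral_const_mul,
      aux_integral_sq_exp hb, aux_integral_lin_exp hb, integral_gaussian]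
    ring

lemma aux_pdf_eq (m s : ℝ) (hs : 0 < s) :
    gaussianPDFReal m s.toNNReal
      = fun x => (Real.sqrt (2 * π * s))⁻¹ * rexp (-(2*s)⁻¹ * (x - m) ^ 2) := by
  funext x
  rw [gaussianPDFReal]
  rw [Real.coe_toNNReal s hs.le]
  congr 1
  ring_nf

lemma aux_pdf_core (m c s : ℝ) (hs : 0 < s) :
    Integrable (fun x => gaussianPDFReal m s.toNNReal x * (x - c) ^ 2) ∧
    ∫ x, gaussianPDFReal m s.toNNReal x * (x - c) ^ 2 = s + (m - c) ^ 2 := by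
  set K := (Real.sqrt (2 * π * s))⁻¹ with hK
  have hb : (0:ℝ) < (2*s)⁻¹ := by positivity
  have hcore := aux_core (A := m - c) hb
  have hfun : (fun x => gaussianPDFReal m s.toNNReal x * (x - c) ^ 2)
      = fun x => K * ((fun u => (u + (m - c)) ^ 2 * rexp (-(2*s)⁻¹ * u ^ 2)) (x - m)) := by
    funext x
    rw [aux_pdf_eq m s hs]
    simp only
    rw [show x - m + (m - c) = x - c by ring]
    ring
  have hsqrt : Real.sqrt (π / (2*s)⁻¹) = Real.sqrt (2 * π * s) := by
    congr 1
    field_simp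
  have hKpos : (0:ℝ) < Real.sqrt (2 * π * s) := Real.sqrt_pos.mpr (by positivity)
  constructor
  · rw [hfun]
    exact (hcore.1.comp_sub_right m).const_mul K
  · rw [hfun, integral_const_mul,
      integral_sub_right_eq_self (fun u => (u + (m - c)) ^ 2 * rexp (-(2*s)⁻¹ * u ^ 2)) m,
      hcore.2, hsqrt]
    rw [hK]
    field_simp

lemma aux_toNNReal_ne_zero {s : ℝ} (hs : 0 < s) : s.toNNReal ≠ 0 :=
  (Real.toNNReal_pos.mpr hs).ne'

lemma aux_integral_gaussianReal (m s : ℝ) (hs : 0 < s) (g : ℝ → ℝ) :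
    ∫ x, g x ∂(gaussianReal m s.toNNReal)
      = ∫ x, gaussianPDFReal m s.toNNReal x * g x := by
  rw [gaussianReal_of_var_ne_zero _ (aux_toNNReal_ne_zero hs)]
  have h : (volume.withDensity (gaussianPDF m s.toNNReal))
      = volume.withDensity (fun x => ((gaussianPDFReal m s.toNNReal x).toNNReal : ℝ≥0∞)) := rfl
  rw [h, integral_withDensity_eq_integral_smul
    ((measurable_gaussianPDFReal m s.toNNReal).real_toNNReal) g]
  congr 1
  funext x
  rw [NNReal.smul_def, smul_eq_mul, Real.coe_toNNReal _ (gaussianPDFReal_nonneg _ _ _)]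

lemma aux_integrable_gaussianReal_iff (m s : ℝ) (hs : 0 < s) (g : ℝ → ℝ) :
    Integrable g (gaussianReal m s.toNNReal)
      ↔ Integrable (fun x => gaussianPDFReal m s.toNNReal x * g x) volume := by
  rw [gaussianReal_of_var_ne_zero _ (aux_toNNReal_ne_zero hs)]
  have h : (volume.withDensity (gaussianPDF m s.toNNReal))
      = volume.withDensity (fun x => ((gaussianPDFReal m s.toNNReal x).toNNReal : ℝ≥0∞)) := rfl
  rw [h, integrable_withDensity_iff_integrable_smul
    ((measurable_gaussianPDFReal m s.toNNReal).real_toNNReal)]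
  constructor <;> intro hI <;> refine hI.congr (Filter.Eventually.of_forall fun x => ?_) <;>
    simp only [NNReal.smul_def, smul_eq_mul,
      Real.coe_toNNReal _ (gaussianPDFReal_nonneg _ _ _)]

lemma aux_integrable_sq (m c s : ℝ) (hs : 0 < s) :
    Integrable (fun x => (x - c) ^ 2) (gaussianReal m s.toNNReal) :=
  (aux_integrable_gaussianReal_iff m s hs _).mpr (aux_pdf_core m c s hs).1

lemma aux_integral_sq (m c s : ℝ) (hs : 0 < s) :
    ∫ x, (x - c) ^ 2 ∂(gaussianReal m s.toNNReal) = s + (m - c) ^ 2 := by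
  rw [aux_integral_gaussianReal m s hs]
  exact (aux_pdf_core m c s hs).2


lemma aux_klDiv_gaussian (m₁ m₂ s : ℝ) (hs : 0 < s) :
    klDiv (gaussianReal m₁ s.toNNReal) (gaussianReal m₂ s.toNNReal)
      = ENNReal.ofReal ((m₁ - m₂) ^ 2 / (2 * s)) := by
  have hv : s.toNNReal ≠ 0 := aux_toNNReal_ne_zero hs
  set v := s.toNNReal with hvdef
  set Q := gaussianReal m₁ v with hQdef
  set P := gaussianReal m₂ v with hPdef
  have hQP : Q ≪ P :=
    (gaussianReal_absolutelyContinuous m₁ hv).trans (gaussianReal_absolutelyContinuous' m₂ hv)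
  have hQv : Q ≪ volume := gaussianReal_absolutelyContinuous m₁ hv
  have h1 : Q.rnDeriv P =ᵐ[volume]
      fun x => (gaussianPDF m₂ v x)⁻¹ * Q.rnDeriv volume x := by
    have := Measure.rnDeriv_withDensity_right Q volume
      (measurable_gaussianPDF m₂ v).aemeasurable
      (Filter.Eventually.of_forall fun x => (gaussianPDF_pos _ hv x).ne')
      (Filter.Eventually.of_forall fun _ => ENNReal.ofReal_ne_top)
    rwa [← gaussianReal_of_var_ne_zero m₂ hv] at this
  have h2 : Q.rnDeriv volume =ᵐ[volume] gaussianPDF m₁ v := rnDeriv_gaussianReal m₁ v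
  set L : ℝ → ℝ := fun x => (x - m₂) ^ 2 / (2 * s) - (x - m₁) ^ 2 / (2 * s) with hLdef
  have hvol : (fun x => Real.log (Q.rnDeriv P x).toReal) =ᵐ[volume] L := by
    filter_upwards [h1, h2] with x hx hx2
    rw [hx, hx2, ENNReal.toReal_mul, ENNReal.toReal_inv]
    rw [gaussianPDF, gaussianPDF, ENNReal.toReal_ofReal (gaussianPDFReal_nonneg _ _ _),
      ENNReal.toReal_ofReal (gaussianPDFReal_nonneg _ _ _)]
    have hpos1 : 0 < gaussianPDFReal m₁ v x := gaussianPDFReal_pos _ _ _ hv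
    have hpos2 : 0 < gaussianPDFReal m₂ v x := gaussianPDFReal_pos _ _ _ hv
    rw [Real.log_mul (by positivity) hpos1.ne', Real.log_inv]
    have hlog : ∀ m : ℝ, Real.log (gaussianPDFReal m v x)
        = -Real.log (Real.sqrt (2 * π * s)) + (-(x - m) ^ 2 / (2 * s)) := by
      intro m
      rw [gaussianPDFReal, hvdef, Real.coe_toNNReal s hs.le]
      have hKpos : (0:ℝ) < Real.sqrt (2 * π * s) := Real.sqrt_pos.mpr (by positivity)
      rw [Real.log_mul (by positivity) (Real.exp_ne_zero _), Real.log_inv, Real.log_exp]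
    rw [hlog m₁, hlog m₂, hLdef]
    ring
  have hae : (fun x => Real.log (Q.rnDeriv P x).toReal) =ᵐ[Q] L := hQv.ae_eq hvol
  have hL_int : Integrable L Q := by
    refine Integrable.sub ?_ ?_
    · exact (aux_integrable_sq m₁ m₂ s hs).div_const (2 * s)
    · exact (aux_integrable_sq m₁ m₁ s hs).div_const (2 * s)
  have h_int : Integrable (fun x => Real.log (Q.rnDeriv P x).toReal) Q := hL_int.congr hae.symm
  rw [klDiv, if_pos ⟨hQP, h_int⟩, integral_congr_ae hae]
  have : ∫ x, L x ∂Q = (m₁ - m₂) ^ 2 / (2 * s) := by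
    rw [hLdef]
    simp only
    rw [integral_sub ((aux_integrable_sq m₁ m₂ s hs).div_const (2 * s))
      ((aux_integrable_sq m₁ m₁ s hs).div_const (2 * s)), integral_div, integral_div,
      aux_integral_sq m₁ m₂ s hs, aux_integral_sq m₁ m₁ s hs]
    field_simp
    ring
  rw [this]

theorem gaussian_posterior_averaged_klDiv_wellspecified
    (μstar μₙ σ σₙ : ℝ) (hσ : 0 < σ) (hσₙ : 0 < σₙ) :
    ((∫⁻ μ, klDiv (gaussianReal μstar (Real.toNNReal (σ ^ 2)))
          (gaussianReal μ (Real.toNNReal (σ ^ 2)))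
        ∂(gaussianReal μₙ (Real.toNNReal (σₙ ^ 2))) : ℝ≥0∞) : EReal)
      = ((((μstar - μₙ) ^ 2 + σₙ ^ 2) / (2 * σ ^ 2) : ℝ) : EReal) := by
  have hσ2 : (0:ℝ) < σ ^ 2 := by positivity
  have hσₙ2 : (0:ℝ) < σₙ ^ 2 := by positivity
  have hpt : ∀ μ : ℝ, klDiv (gaussianReal μstar (Real.toNNReal (σ ^ 2)))
      (gaussianReal μ (Real.toNNReal (σ ^ 2)))
      = ENNReal.ofReal ((μstar - μ) ^ 2 / (2 * σ ^ 2)) :=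
    fun μ => aux_klDiv_gaussian μstar μ (σ ^ 2) hσ2
  rw [lintegral_congr hpt]
  have hint : Integrable (fun μ : ℝ => (μstar - μ) ^ 2 / (2 * σ ^ 2))
      (gaussianReal μₙ (Real.toNNReal (σₙ ^ 2))) := by
    have h := (aux_integrable_sq μₙ μstar (σₙ ^ 2) hσₙ2).div_const (2 * σ ^ 2)
    refine h.congr (Filter.Eventually.of_forall fun x => ?_)
    ring_nf
  rw [← ofReal_integral_eq_lintegral_ofReal hint
    (Filter.Eventually.of_forall fun x => by positivity)]
  have hval : ∫ μ : ℝ, (μstar - μ) ^ 2 / (2 * σ ^ 2)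
      ∂(gaussianReal μₙ (Real.toNNReal (σₙ ^ 2)))
      = ((μstar - μₙ) ^ 2 + σₙ ^ 2) / (2 * σ ^ 2) := by
    have : (fun μ : ℝ => (μstar - μ) ^ 2 / (2 * σ ^ 2))
        = fun μ : ℝ => (μ - μstar) ^ 2 / (2 * σ ^ 2) := by
      funext μ; ring
    rw [this, integral_div, aux_integral_sq μₙ μstar (σₙ ^ 2) hσₙ2]
    ring
  rw [hval, EReal.coe_ennreal_ofReal, max_eq_left (by positivity)]
end

section
/- (Weak-duality upper bound, Equation (4).) Let Ξ and Θ be measurable spaces, let Π be a probability measure on Θ, let {P_θ}_{θ∈Θ} be a measurable family of probability measures on Ξ, let f : Ξ → ℝ be bounded and measurable, and let ε ≥ 0. Then sup over probability measures Q on Ξ satisfying ∫ KL(Q ‖ P_θ) dΠ(θ) ≤ ε of ∫ f dQ is at most inf over γ > 0 of γε + γ ∫ log ∫ exp(f(ξ)/γ) dP_θ(ξ) dΠ(θ). -/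
open MeasureTheory ProbabilityTheory Real
open scoped ENNReal NNReal Classical

/-!
For every `θ` and every bounded measurable `g`, the easy half of the Donsker–Varadhan
formula gives `∫ g dQ - log ∫ exp g dP_θ ≤ KL(Q ‖ P_θ)`; it is Gibbs' inequality
`KL(Q ‖ P_θ^g) ≥ 0` for the tilted measure `dP_θ^g ∝ exp g dP_θ`. Averaging over `θ ~ Π` and
using the constraint bounds the left side by `ε`; take `g = f / γ` and multiply by `γ`.
-/

section Gibbs

variable {α : Type*} [MeasurableSpace α] {μ ν : Measure α}

lemma integral_llr_nonneg [IsProbabilityMeasure μ] [IsProbabilityMeasure ν]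
    (hμν : μ ≪ ν) (h_int : Integrable (llr μ ν) μ) : 0 ≤ ∫ x, llr μ ν x ∂μ := by
  simpa using InformationTheory.integral_llr_add_sub_measure_univ_nonneg hμν h_int

lemma integral_le_integral_llr_add_log_integral_exp [IsProbabilityMeasure μ] [SigmaFinite ν]
    [NeZero ν] (hμν : μ ≪ ν) (h_int : Integrable (llr μ ν) μ) {g : α → ℝ}
    (hgμ : Integrable g μ) (hgν : Integrable (fun x ↦ exp (g x)) ν) :
    ∫ x, g x ∂μ ≤ ∫ x, llr μ ν x ∂μ + log (∫ x, exp (g x) ∂ν) := by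
  have := isProbabilityMeasure_tilted hgν
  have h_tilted := integral_llr_nonneg (hμν.trans (absolutelyContinuous_tilted hgν))
    (integrable_llr_tilted_right hμν hgμ h_int hgν)
  rw [integral_llr_tilted_right hμν hgμ hgν h_int] at h_tilted
  linarith

lemma ofReal_integral_sub_log_integral_exp_le_klDiv [IsProbabilityMeasure μ] [SigmaFinite ν]
    [NeZero ν] {g : α → ℝ} (hgμ : Integrable g μ) (hgν : Integrable (fun x ↦ exp (g x)) ν) :
    ENNReal.ofReal (∫ x, g x ∂μ - log (∫ x, exp (g x) ∂ν)) ≤ klDiv μ ν := by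
  unfold klDiv
  split_ifs with h
  · have h_gibbs := integral_le_integral_llr_add_log_integral_exp h.1 h.2 hgμ hgν
    simp only [llr] at h_gibbs
    exact ENNReal.ofReal_le_ofReal (by linarith)
  · exact le_top

end Gibbs

section Bounded

variable {α : Type*} [MeasurableSpace α] {μ : Measure α} {g : α → ℝ} {K : ℝ}

lemma integrable_of_abs_le [IsFiniteMeasure μ] (hg : Measurable g) (hgK : ∀ x, |g x| ≤ K) :
    Integrable g μ :=
  .of_bound hg.aestronglyMeasurable K (.of_forall hgK)

lemma integrable_exp_of_abs_le [IsFiniteMeasure μ] (hg : Measurable g) (hgK : ∀ x, |g x| ≤ K) :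
    Integrable (fun x ↦ exp (g x)) μ :=
  integrable_of_abs_le (K := exp K) hg.exp fun x ↦ by
    rw [abs_of_pos (exp_pos _), exp_le_exp]
    exact (abs_le.mp (hgK x)).2

lemma abs_log_integral_exp_le [IsProbabilityMeasure μ] (hg : Measurable g)
    (hgK : ∀ x, |g x| ≤ K) : |log (∫ x, exp (g x) ∂μ)| ≤ K := by
  have h_int := integrable_exp_of_abs_le (μ := μ) hg hgK
  have h_pos : 0 < ∫ x, exp (g x) ∂μ := integral_exp_pos h_int
  rw [abs_le, le_log_iff_exp_le h_pos, log_le_iff_le_exp h_pos]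
  constructor
  · simpa using integral_mono (integrable_const _) h_int
      fun x ↦ exp_le_exp.mpr (abs_le.mp (hgK x)).1
  · simpa using integral_mono h_int (integrable_const _)
      fun x ↦ exp_le_exp.mpr (abs_le.mp (hgK x)).2

end Bounded

lemma measurable_integral_of_measurable_measure {α β : Type*} [MeasurableSpace α]
    [MeasurableSpace β] {P : α → Measure β} (hP : Measurable P) {h : β → ℝ}
    (hh : Measurable h) : Measurable fun a ↦ ∫ b, h b ∂P a :=
  (hh.stronglyMeasurable.integral_kernel (κ := ⟨P, hP⟩)).measurable

lemma integral_le_of_lintegral_ofReal_le {α : Type*} [MeasurableSpace α] {μ : Measure α}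
    {h : α → ℝ} (hh : Integrable h μ) {ε : ℝ} (hε : 0 ≤ ε)
    (hle : ∫⁻ x, ENNReal.ofReal (h x) ∂μ ≤ ENNReal.ofReal ε) : ∫ x, h x ∂μ ≤ ε := by
  rw [integral_eq_lintegral_pos_part_sub_lintegral_neg_part hh]
  have := ENNReal.toReal_mono ENNReal.ofReal_ne_top hle
  rw [ENNReal.toReal_ofReal hε] at this
  linarith [ENNReal.toReal_nonneg (a := ∫⁻ x, ENNReal.ofReal (-h x) ∂μ)]

/-- Weak duality: any feasible `Q` (probability measure whose expected KL to the
family is finite and at most `ε`) has objective value at most the dual objective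
at any `γ > 0`; i.e. the sup over feasible `Q` is at most the inf over `γ > 0`. -/
theorem dro_bas_weak_duality_upper_bound
    {Ξ Θ : Type*} [MeasurableSpace Ξ] [MeasurableSpace Θ]
    (Prior : Measure Θ) [IsProbabilityMeasure Prior]
    (P : Θ → Measure Ξ) (hP_prob : ∀ θ, IsProbabilityMeasure (P θ))
    (hP_meas : Measurable P)
    (f : Ξ → ℝ) (hf_meas : Measurable f) (hf_bdd : ∃ C : ℝ, ∀ x, |f x| ≤ C)
    (ε : ℝ) (hε : 0 ≤ ε) :
    ∀ Q : Measure Ξ, IsProbabilityMeasure Q →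
      (∫⁻ θ, klDiv Q (P θ) ∂Prior) ≤ ENNReal.ofReal ε →
      ∀ γ : ℝ, 0 < γ →
        ∫ ξ, f ξ ∂Q
          ≤ γ * ε + γ * ∫ θ, Real.log (∫ ξ, Real.exp (f ξ / γ) ∂(P θ)) ∂Prior := by
  intro Q hQ hKL γ hγ
  obtain ⟨C, hC⟩ := hf_bdd
  have hg : Measurable fun ξ ↦ f ξ / γ := hf_meas.div_const γ
  have hgC : ∀ ξ, |f ξ / γ| ≤ C / γ := fun ξ ↦ by
    rw [abs_div, abs_of_pos hγ]
    exact div_le_div_of_nonneg_right (hC ξ) hγ.le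
  set L : Θ → ℝ := fun θ ↦ log (∫ ξ, exp (f ξ / γ) ∂P θ)
  have hL : Integrable L Prior :=
    integrable_of_abs_le (measurable_integral_of_measurable_measure hP_meas hg.exp).log
      fun θ ↦ have := hP_prob θ; abs_log_integral_exp_le hg hgC
  have h_gap : ∫ θ, (∫ ξ, f ξ / γ ∂Q - L θ) ∂Prior ≤ ε :=
    integral_le_of_lintegral_ofReal_le ((integrable_const _).sub hL) hε <|
      (lintegral_mono fun θ ↦ ofReal_integral_sub_log_integral_exp_le_klDiv
        (integrable_of_abs_le hg hgC) (integrable_exp_of_abs_le hg hgC)).trans hKL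
  rw [integral_sub (integrable_const _) hL, integral_const, integral_div] at h_gap
  rw [probReal_univ, one_smul, sub_le_iff_le_add, div_le_iff₀ hγ] at h_gap
  linarith
end
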